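/- arXiv:2008.02856 — 3 statements merged into one kernel-verified Lean document; each statement's English description precedes it below -/
import Mathlib

section
/- Let β > 0 and 0 < α < 2/(λ₁ + β). Then there exists a real number ρ with ϱ ≤ ρ < 1 such that for every column index j ∈ {1, …, d} and every iteration t ≥ 0, ‖k_j(t+1) − k_{j,β}‖ ≤ ρ · ‖k_j(t) − k_{j,β}‖, where k_j(t) denotes the j-th column of K(t) and k_{j,β} the j-th column of K_β. -/
open Matrix Finset

/-! With `M = AᵀA + βI`, the error `K(t) - M⁻¹` obeys `K(t+1) - M⁻¹ = (I - αM)(K(t) - M⁻¹)`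
(Richardson iteration for `MK = I`). In the orthonormal eigenbasis `V` of `AᵀA` the matrix `I - αM`
is diagonal with entries `1 - α(λᵢ + β)`, all of absolute value at most
`ρ = max |1 - α(λ₁ + β)| |1 - α(λ_d + β)|`, and `ρ < 1` exactly when `0 < α < 2/(λ₁ + β)`.
Conjugating by an orthogonal matrix preserves the Euclidean norm, so every column of the error
contracts by `ρ`. Minimising `ρ` over `α` gives `ϱ`, hence `ϱ ≤ ρ`. -/

noncomputable def euclEnorm {d : ℕ} (v : Fin d → ℝ) : ℝ :=
  Real.sqrt (∑ i, v i ^ 2)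

def mcol {n d : ℕ} (M : Matrix (Fin n) (Fin d) ℝ) (j : Fin d) : Fin n → ℝ :=
  fun i => M i j

section Spectral

variable {ι : Type*} [Fintype ι] [DecidableEq ι] {V : Matrix ι ι ℝ}

theorem conj_diagonal_add_smul_one (hV : V * Vᵀ = 1) (μ : ι → ℝ) (β : ℝ) :
    V * diagonal μ * Vᵀ + β • 1 = V * diagonal (fun i => μ i + β) * Vᵀ := by
  have hD : diagonal (fun i => μ i + β) = diagonal μ + β • 1 := by
    rw [smul_one_eq_diagonal, diagonal_add]
  rw [hD, Matrix.mul_add, Matrix.add_mul, Matrix.mul_smul, Matrix.smul_mul, Matrix.mul_one, hV]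

theorem one_sub_smul_conj_diagonal (hV : V * Vᵀ = 1) (μ : ι → ℝ) (α : ℝ) :
    1 - α • (V * diagonal μ * Vᵀ) = V * diagonal (fun i => 1 - α * μ i) * Vᵀ := by
  have hD : diagonal (fun i => 1 - α * μ i) = 1 - α • diagonal μ := by
    rw [← diagonal_one, ← diagonal_smul, ← diagonal_sub]
    rfl
  rw [hD, Matrix.mul_sub, Matrix.sub_mul, Matrix.mul_one, hV, Matrix.mul_smul, Matrix.smul_mul]

theorem nonneg_of_posSemidef_eq_conj_diagonal (hV : Vᵀ * V = 1) {S : Matrix ι ι ℝ}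
    (hS : S.PosSemidef) {μ : ι → ℝ} (hSμ : S = V * diagonal μ * Vᵀ) : ∀ i, 0 ≤ μ i := by
  have hdiag : diagonal μ = Vᵀ * S * V := by
    rw [hSμ, Matrix.mul_assoc, Matrix.mul_assoc, hV, Matrix.mul_one, ← Matrix.mul_assoc, hV,
      Matrix.one_mul]
  have := hS.conjTranspose_mul_mul_same V
  rw [conjTranspose_eq_transpose_of_trivial, ← hdiag] at this
  exact posSemidef_diagonal_iff.mp this

end Spectral

theorem richardson_step_sub_eq_mul_sub {𝕜 R : Type*} [CommRing 𝕜] [Ring R] [Algebra 𝕜 R]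
    {M X : R} (hMX : M * X = 1) (α : 𝕜) (K : R) :
    K - α • (M * K - 1) - X = (1 - α • M) * (K - X) := by
  rw [sub_mul, one_mul, smul_mul_assoc, mul_sub, hMX]
  abel

theorem abs_one_sub_mul_le_max {α a b x : ℝ} (hα : 0 ≤ α) (hbx : b ≤ x) (hxa : x ≤ a) :
    |1 - α * x| ≤ max |1 - α * a| |1 - α * b| := by
  have hb : α * b ≤ α * x := mul_le_mul_of_nonneg_left hbx hα
  have ha : α * x ≤ α * a := mul_le_mul_of_nonneg_left hxa hα
  rw [abs_le]
  constructor
  · linarith [neg_abs_le (1 - α * a), le_max_left |1 - α * a| |1 - α * b|]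
  · linarith [le_abs_self (1 - α * b), le_max_right |1 - α * a| |1 - α * b|]

theorem sub_div_add_le_max_abs_one_sub_mul {a b : ℝ} (ha : 0 < a) (hb : 0 < b) (α : ℝ) :
    (a - b) / (a + b) ≤ max |1 - α * a| |1 - α * b| := by
  rw [div_le_iff₀ (by linarith)]
  have h₁ : α * a - 1 ≤ max |1 - α * a| |1 - α * b| := by
    linarith [neg_abs_le (1 - α * a), le_max_left |1 - α * a| |1 - α * b|]
  have h₂ : 1 - α * b ≤ max |1 - α * a| |1 - α * b| :=
    (le_abs_self _).trans (le_max_right _ _)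
  -- `a - b = b (α a - 1) + a (1 - α b)`
  nlinarith [mul_le_mul_of_nonneg_left h₁ hb.le, mul_le_mul_of_nonneg_left h₂ ha.le]

theorem mcol_mul {m n d : ℕ} (P : Matrix (Fin m) (Fin n) ℝ) (Q : Matrix (Fin n) (Fin d) ℝ)
    (j : Fin d) : mcol (P * Q) j = P *ᵥ mcol Q j :=
  rfl

theorem mcol_sub {n d : ℕ} (P Q : Matrix (Fin n) (Fin d) ℝ) (j : Fin d) :
    mcol (P - Q) j = mcol P j - mcol Q j :=
  rfl

section EuclideanNorm

variable {d : ℕ}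

theorem euclEnorm_mulVec_of_transpose_mul_self {V : Matrix (Fin d) (Fin d) ℝ} (hV : Vᵀ * V = 1)
    (u : Fin d → ℝ) : euclEnorm (V *ᵥ u) = euclEnorm u := by
  have h : V *ᵥ u ⬝ᵥ V *ᵥ u = u ⬝ᵥ u := by
    rw [dotProduct_mulVec, ← mulVec_transpose, mulVec_mulVec, hV, one_mulVec]
  simp only [dotProduct, ← sq] at h
  rw [euclEnorm, euclEnorm, h]

theorem euclEnorm_diagonal_mulVec_le {c : Fin d → ℝ} {ρ : ℝ} (hρ : 0 ≤ ρ) (hc : ∀ i, |c i| ≤ ρ)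
    (w : Fin d → ℝ) : euclEnorm (diagonal c *ᵥ w) ≤ ρ * euclEnorm w := by
  have hsum : ∑ i, (diagonal c *ᵥ w) i ^ 2 ≤ ρ ^ 2 * ∑ i, w i ^ 2 := by
    rw [Finset.mul_sum]
    refine Finset.sum_le_sum fun i _ => ?_
    rw [mulVec_diagonal, mul_pow, ← sq_abs (c i)]
    gcongr
    exact hc i
  calc euclEnorm (diagonal c *ᵥ w) ≤ Real.sqrt (ρ ^ 2 * ∑ i, w i ^ 2) := Real.sqrt_le_sqrt hsum
    _ = ρ * euclEnorm w := by rw [Real.sqrt_mul (sq_nonneg ρ), Real.sqrt_sq hρ, euclEnorm]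

theorem euclEnorm_conj_diagonal_mulVec_le {V : Matrix (Fin d) (Fin d) ℝ} (hV : Vᵀ * V = 1)
    {c : Fin d → ℝ} {ρ : ℝ} (hρ : 0 ≤ ρ) (hc : ∀ i, |c i| ≤ ρ) (v : Fin d → ℝ) :
    euclEnorm ((V * diagonal c * Vᵀ) *ᵥ v) ≤ ρ * euclEnorm v := by
  have hVt : Vᵀᵀ * Vᵀ = 1 := by rw [transpose_transpose, mul_eq_one_comm.mp hV]
  rw [← mulVec_mulVec, ← mulVec_mulVec, euclEnorm_mulVec_of_transpose_mul_self hV,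
    ← euclEnorm_mulVec_of_transpose_mul_self hVt v]
  exact euclEnorm_diagonal_mulVec_le hρ hc _

end EuclideanNorm

/-- Lemma 2 of the paper: linear convergence of the columns of the
iterative pre-conditioner matrix `K(t)` to the columns of `K_β = (AᵀA + βI)⁻¹`. -/
theorem ipg_preconditioner_column_contraction
    (n d : ℕ) (hd : 0 < d)
    (A : Matrix (Fin n) (Fin d) ℝ)
    (lam : Fin d → ℝ) (V : Matrix (Fin d) (Fin d) ℝ)
    (hV : Vᵀ * V = 1)
    (hdiag : Aᵀ * A = V * Matrix.diagonal lam * Vᵀ)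
    (hanti : Antitone lam)
    (α β : ℝ) (hβ : 0 < β)
    (hα0 : 0 < α) (hα : α < 2 / (lam ⟨0, hd⟩ + β))
    (K : ℕ → Matrix (Fin d) (Fin d) ℝ)
    (hK : ∀ t, K (t + 1) = K t - α • ((Aᵀ * A + β • 1) * K t - 1)) :
    ∃ ρ : ℝ,
      (lam ⟨0, hd⟩ - lam ⟨d - 1, by omega⟩) /
          (lam ⟨0, hd⟩ + lam ⟨d - 1, by omega⟩ + 2 * β) ≤ ρ ∧
      ρ < 1 ∧
      ∀ (j : Fin d) (t : ℕ),
        euclEnorm (mcol (K (t + 1)) j - mcol ((Aᵀ * A + β • 1)⁻¹) j) ≤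
          ρ * euclEnorm (mcol (K t) j - mcol ((Aᵀ * A + β • 1)⁻¹) j) := by
  have hVVt : V * Vᵀ = 1 := mul_eq_one_comm.mp hV
  have hAA : (Aᵀ * A).PosSemidef := by
    simpa [conjTranspose_eq_transpose_of_trivial] using posSemidef_conjTranspose_mul_self A
  have hlam : ∀ i, 0 ≤ lam i := nonneg_of_posSemidef_eq_conj_diagonal hV hAA hdiag
  set M := Aᵀ * A + β • 1 with hM
  have hMpos : M.PosDef := PosDef.posSemidef_add hAA (PosDef.one.smul hβ)
  have hMinv : M * M⁻¹ = 1 := M.mul_nonsing_inv (M.isUnit_iff_isUnit_det.mp hMpos.isUnit)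
  have hiter : 1 - α • M = V * diagonal (fun i => 1 - α * (lam i + β)) * Vᵀ := by
    rw [hM, hdiag, conj_diagonal_add_smul_one hVVt, one_sub_smul_conj_diagonal hVVt]
  set a := lam ⟨0, hd⟩ + β
  set b := lam ⟨d - 1, by omega⟩ + β
  have hb : 0 < b := by linarith [hlam ⟨d - 1, by omega⟩]
  have hbx : ∀ i, b ≤ lam i + β := fun i =>
    add_le_add_left (hanti (Fin.le_iff_val_le_val.mpr (Nat.le_sub_one_of_lt i.isLt))) β
  have hxa : ∀ i, lam i + β ≤ a := fun i =>
    add_le_add_left (hanti (Fin.le_iff_val_le_val.mpr (Nat.zero_le _))) β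
  have ha : 0 < a := hb.trans_le (hxa _)
  have hαa : α * a < 2 := (lt_div_iff₀ ha).mp hα
  refine ⟨max |1 - α * a| |1 - α * b|, ?_, ?_, fun j t => ?_⟩
  · convert sub_div_add_le_max_abs_one_sub_mul ha hb α using 2 <;> ring
  · have hαb : 0 < α * b := mul_pos hα0 hb
    have hαba : α * b ≤ α * a := mul_le_mul_of_nonneg_left (hxa _) hα0.le
    exact max_lt (abs_sub_lt_iff.mpr ⟨by linarith, by linarith⟩)
      (abs_sub_lt_iff.mpr ⟨by linarith, by linarith⟩)
  · rw [← mcol_sub, ← mcol_sub, hK t, richardson_step_sub_eq_mul_sub hMinv, mcol_mul, hiter]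
    exact euclEnorm_conj_diagonal_mulVec_le hV (le_max_of_le_left (abs_nonneg _))
      (fun i => abs_one_sub_mul_le_max hα0.le (hbx i) (hxa i)) _
end

section
/- Suppose AᵀA ≠ 0, β > 0, 0 < α < 2/(λ₁ + β), and 0 < δ < 2(λ₁ + β)/λ₁. Then there exist real numbers μ and ρ with μ* ≤ μ < 1 and ϱ ≤ ρ < 1 such that for every iteration t ≥ 0, ‖g(t+1)‖ ≤ (μ + δ λ₁ ‖K(0) − K_β‖_F · ρ^{t+1}) · ‖g(t)‖. -/
open Matrix Finset

/-- Euclidean norm of a vector in `ℝ^d`. -/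
noncomputable def vecEnorm {d : ℕ} (v : Fin d → ℝ) : ℝ :=
  Real.sqrt (∑ i, v i ^ 2)

/-- Frobenius norm of a matrix. -/
noncomputable def frob {n d : ℕ} (M : Matrix (Fin n) (Fin d) ℝ) : ℝ :=
  Real.sqrt (∑ i, ∑ j, M i j ^ 2)

/-!
In an orthonormal eigenbasis of `AᵀA` every matrix of the method is diagonal. The preconditioner
error `K(t) - K_β` is multiplied by `1 - α (AᵀA + βI)` at every step, an operator of spectral norm
`ρ = max |1 - α (λᵢ + β)| < 1`, so it decays like `ρ ^ t` in Frobenius norm. The gradients satisfy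
`g(t+1) = (1 - δ AᵀA K_β) g(t) - δ AᵀA (K(t+1) - K_β) g(t)`. Since `g(t)` lies in the range of `Aᵀ`,
the first operator only acts through the nonzero eigenvalues and contracts by
`μ = max_{λᵢ ≠ 0} |1 - δ λᵢ / (λᵢ + β)| < 1`, while the second term is at most
`δ λ₁ ρ ^ (t+1) ‖K(0) - K_β‖_F ‖g(t)‖`. The lower bounds `μ*` and `ϱ` are the values of these
maxima at the optimal step sizes.
-/

-- The spectral norm of `1 - c • X` for a symmetric `X` with spectrum in `[a, b]`.
noncomputable def richardsonRate (c a b : ℝ) : ℝ :=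
  max |1 - c * b| |1 - c * a|

lemma richardsonRate_nonneg (c a b : ℝ) : 0 ≤ richardsonRate c a b :=
  (abs_nonneg _).trans (le_max_left _ _)

lemma abs_one_sub_mul_le_richardsonRate {c a b x : ℝ} (hc : 0 ≤ c) (hax : a ≤ x) (hxb : x ≤ b) :
    |1 - c * x| ≤ richardsonRate c a b :=
  abs_le_max_abs_abs (by nlinarith) (by nlinarith)

lemma richardsonRate_lt_one {c a b : ℝ} (hc : 0 < c) (ha : 0 < a) (hab : a ≤ b)
    (hcb : c * b < 2) : richardsonRate c a b < 1 := by
  have hca : 0 < c * a := mul_pos hc ha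
  have hcab : c * a ≤ c * b := by gcongr
  exact max_lt (abs_lt.2 ⟨by linarith, by linarith⟩) (abs_lt.2 ⟨by linarith, by linarith⟩)

-- The step size `c = 2 / (a + b)` attains this bound.
lemma sub_div_add_le_richardsonRate (c : ℝ) {a b : ℝ} (ha : 0 ≤ a) (hb : 0 ≤ b) :
    (b - a) / (a + b) ≤ richardsonRate c a b := by
  rcases (add_nonneg ha hb).eq_or_lt with hab | hab
  · rw [← hab, div_zero]
    exact richardsonRate_nonneg c a b
  rw [div_le_iff₀ hab]
  have hb' : 1 - c * a ≤ richardsonRate c a b := (le_abs_self _).trans (le_max_right _ _)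
  have ha' : -(1 - c * b) ≤ richardsonRate c a b := (neg_le_abs _).trans (le_max_left _ _)
  linarith [mul_le_mul_of_nonneg_left hb' hb, mul_le_mul_of_nonneg_left ha' ha]

lemma sub_div_add_add_two_mul_div_le_richardsonRate (c : ℝ) {a b β : ℝ} (hβ : 0 < β)
    (ha : 0 < a) (hb : 0 < b) :
    (b - a) / (b + a + 2 * (b * a / β)) ≤ richardsonRate c (a / (a + β)) (b / (b + β)) := by
  rw [show (b - a) / (b + a + 2 * (b * a / β))
      = (b / (b + β) - a / (a + β)) / (a / (a + β) + b / (b + β)) by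
    field_simp
    ring]
  exact sub_div_add_le_richardsonRate c (div_pos ha (by linarith)).le (div_pos hb (by linarith)).le

lemma sub_div_add_add_two_mul_le_richardsonRate (c : ℝ) {a b β : ℝ} (hβ : 0 < β)
    (ha : 0 ≤ a) (hb : 0 ≤ b) :
    (b - a) / (b + a + 2 * β) ≤ richardsonRate c (a + β) (b + β) := by
  rw [show (b - a) / (b + a + 2 * β) = (b + β - (a + β)) / (a + β + (b + β)) by ring_nf]
  exact sub_div_add_le_richardsonRate c (by linarith) (by linarith)

lemma div_add_le_div_add {β x y : ℝ} (hβ : 0 < β) (hx : 0 ≤ x) (hxy : x ≤ y) :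
    x / (x + β) ≤ y / (y + β) := by
  rw [div_le_div_iff₀ (by linarith) (by linarith)]
  nlinarith

section Norms

variable {m n d : ℕ}

lemma vecEnorm_nonneg (v : Fin d → ℝ) : 0 ≤ vecEnorm v := Real.sqrt_nonneg _

lemma vecEnorm_sq (v : Fin d → ℝ) : vecEnorm v ^ 2 = ∑ i, v i ^ 2 :=
  Real.sq_sqrt (by positivity)

lemma vecEnorm_eq_sqrt_dotProduct (v : Fin d → ℝ) : vecEnorm v = √(v ⬝ᵥ v) := by
  simp only [vecEnorm, dotProduct, sq]

lemma vecEnorm_eq_norm (v : Fin d → ℝ) : vecEnorm v = ‖WithLp.toLp 2 v‖ := by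
  simp [vecEnorm, EuclideanSpace.norm_eq]

lemma vecEnorm_sub_le (u v : Fin d → ℝ) : vecEnorm (u - v) ≤ vecEnorm u + vecEnorm v := by
  simpa only [vecEnorm_eq_norm, WithLp.toLp_sub] using norm_sub_le _ _

lemma vecEnorm_smul (c : ℝ) (v : Fin d → ℝ) : vecEnorm (c • v) = |c| * vecEnorm v := by
  simp only [vecEnorm_eq_norm, WithLp.toLp_smul, norm_smul, Real.norm_eq_abs]

lemma vecEnorm_le_mul_of_sum_sq_le {u : Fin m → ℝ} {v : Fin n → ℝ} {c : ℝ} (hc : 0 ≤ c)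
    (h : ∑ i, u i ^ 2 ≤ c ^ 2 * ∑ i, v i ^ 2) : vecEnorm u ≤ c * vecEnorm v := by
  rw [← sq_le_sq₀ (vecEnorm_nonneg u) (by positivity [vecEnorm_nonneg v]), mul_pow,
    vecEnorm_sq, vecEnorm_sq]
  exact h

lemma frob_nonneg (M : Matrix (Fin m) (Fin n) ℝ) : 0 ≤ frob M := Real.sqrt_nonneg _

lemma frob_sq_eq_sum_vecEnorm_sq (M : Matrix (Fin m) (Fin n) ℝ) :
    frob M ^ 2 = ∑ j, vecEnorm (fun i => M i j) ^ 2 := by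
  rw [frob, Real.sq_sqrt (by positivity), Finset.sum_comm]
  simp only [vecEnorm_sq]

lemma vecEnorm_mulVec_le_frob (M : Matrix (Fin m) (Fin n) ℝ) (v : Fin n → ℝ) :
    vecEnorm (M *ᵥ v) ≤ frob M * vecEnorm v := by
  refine vecEnorm_le_mul_of_sum_sq_le (frob_nonneg M) ?_
  rw [frob, Real.sq_sqrt (by positivity), Finset.sum_mul]
  exact Finset.sum_le_sum fun i _ => Finset.sum_mul_sq_le_sq_mul_sq univ (M i) v

lemma frob_mul_le {P : Matrix (Fin m) (Fin d) ℝ} {c : ℝ} (hc : 0 ≤ c)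
    (hP : ∀ v, vecEnorm (P *ᵥ v) ≤ c * vecEnorm v) (M : Matrix (Fin d) (Fin n) ℝ) :
    frob (P * M) ≤ c * frob M := by
  rw [← sq_le_sq₀ (frob_nonneg _) (by positivity [frob_nonneg M]), mul_pow,
    frob_sq_eq_sum_vecEnorm_sq, frob_sq_eq_sum_vecEnorm_sq, Finset.mul_sum]
  refine Finset.sum_le_sum fun j _ => ?_
  rw [← mul_pow]
  exact pow_le_pow_left₀ (vecEnorm_nonneg _) (hP fun i => M i j) 2

lemma vecEnorm_mulVec_of_transpose_mul_self {V : Matrix (Fin d) (Fin d) ℝ} (hV : Vᵀ * V = 1)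
    (v : Fin d → ℝ) : vecEnorm (V *ᵥ v) = vecEnorm v := by
  rw [vecEnorm_eq_sqrt_dotProduct, vecEnorm_eq_sqrt_dotProduct, dotProduct_mulVec,
    ← mulVec_transpose, mulVec_mulVec, hV, one_mulVec]

end Norms

section Spectral

variable {d : ℕ} (U : orthogonalGroup (Fin d) ℝ)

noncomputable def spectralAlgHom : (Fin d → ℝ) →ₐ[ℝ] Matrix (Fin d) (Fin d) ℝ :=
  (Unitary.conjStarAlgAut ℝ _ U).toAlgEquiv.toAlgHom.comp (diagonalAlgHom ℝ)

lemma spectralAlgHom_apply (e : Fin d → ℝ) :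
    spectralAlgHom U e = U * diagonal e * (U : Matrix (Fin d) (Fin d) ℝ)ᵀ := by
  simp [spectralAlgHom, star_eq_conjTranspose, conjTranspose_eq_transpose_of_trivial]

lemma transpose_mul_self_of_orthogonal : (U : Matrix (Fin d) (Fin d) ℝ)ᵀ * U = 1 :=
  (mem_orthogonalGroup_iff' _ _).1 U.2

lemma mul_transpose_self_of_orthogonal : U * (U : Matrix (Fin d) (Fin d) ℝ)ᵀ = 1 :=
  (mem_orthogonalGroup_iff _ _).1 U.2

lemma spectralAlgHom_mulVec (e v : Fin d → ℝ) :
    spectralAlgHom U e *ᵥ v = U *ᵥ (e * ((U : Matrix (Fin d) (Fin d) ℝ)ᵀ *ᵥ v)) := by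
  rw [spectralAlgHom_apply, ← mulVec_mulVec, ← mulVec_mulVec]
  congr 1
  ext i
  exact mulVec_diagonal _ _ i

lemma vecEnorm_spectralAlgHom_mulVec_le (e v : Fin d → ℝ) {c : ℝ} (hc : 0 ≤ c)
    (he : ∀ i, ((U : Matrix (Fin d) (Fin d) ℝ)ᵀ *ᵥ v) i ≠ 0 → |e i| ≤ c) :
    vecEnorm (spectralAlgHom U e *ᵥ v) ≤ c * vecEnorm v := by
  have hUt : (U : Matrix (Fin d) (Fin d) ℝ)ᵀᵀ * (U : Matrix (Fin d) (Fin d) ℝ)ᵀ = 1 := by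
    rw [transpose_transpose]
    exact mul_transpose_self_of_orthogonal U
  rw [spectralAlgHom_mulVec, vecEnorm_mulVec_of_transpose_mul_self
    (transpose_mul_self_of_orthogonal U), ← vecEnorm_mulVec_of_transpose_mul_self hUt v]
  refine vecEnorm_le_mul_of_sum_sq_le hc ?_
  rw [Finset.mul_sum]
  refine Finset.sum_le_sum fun i _ => ?_
  rw [Pi.mul_apply, mul_pow]
  rcases eq_or_ne (((U : Matrix (Fin d) (Fin d) ℝ)ᵀ *ᵥ v) i) 0 with h | h
  · simp [h]
  · exact mul_le_mul_of_nonneg_right (sq_le_sq.2 ((he i h).trans (le_abs_self c))) (sq_nonneg _)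

lemma spectralAlgHom_mul_inv {e : Fin d → ℝ} (he : ∀ i, e i ≠ 0) :
    spectralAlgHom U e * spectralAlgHom U e⁻¹ = 1 := by
  rw [← map_mul, show e * e⁻¹ = 1 from funext fun i => mul_inv_cancel₀ (he i), map_one]

lemma spectralAlgHom_inv {e : Fin d → ℝ} (he : ∀ i, e i ≠ 0) :
    (spectralAlgHom U e)⁻¹ = spectralAlgHom U e⁻¹ :=
  inv_eq_right_inv (spectralAlgHom_mul_inv U he)

-- The `i`-th column `c` of `A * U` has `c ⬝ᵥ c = lam i`, so `lam i = 0` forces `c = 0`.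
lemma transpose_mulVec_transpose_mulVec_apply_eq_zero {n : ℕ} {A : Matrix (Fin n) (Fin d) ℝ}
    {lam : Fin d → ℝ} (hA : Aᵀ * A = spectralAlgHom U lam) {i : Fin d} (hi : lam i = 0)
    (w : Fin n → ℝ) : ((U : Matrix (Fin d) (Fin d) ℝ)ᵀ *ᵥ (Aᵀ *ᵥ w)) i = 0 := by
  set C := A * (U : Matrix (Fin d) (Fin d) ℝ)
  have hC : Cᵀ * C = diagonal lam := by
    rw [show Cᵀ * C = (U : Matrix (Fin d) (Fin d) ℝ)ᵀ * (Aᵀ * A) * (U : Matrix (Fin d) (Fin d) ℝ) by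
      simp only [C, transpose_mul, Matrix.mul_assoc], hA, spectralAlgHom_apply]
    simp only [← Matrix.mul_assoc, transpose_mul_self_of_orthogonal, Matrix.one_mul]
    rw [Matrix.mul_assoc, transpose_mul_self_of_orthogonal, Matrix.mul_one]
  have hcol : (fun k => C k i) = 0 := by
    refine dotProduct_self_eq_zero.1 ?_
    rw [← hi, ← diagonal_apply_eq lam i, ← hC]
    rfl
  calc ((U : Matrix (Fin d) (Fin d) ℝ)ᵀ *ᵥ (Aᵀ *ᵥ w)) i = (fun k => C k i) ⬝ᵥ w := by
        rw [mulVec_mulVec, ← transpose_mul]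
        rfl
    _ = 0 := by rw [hcol, zero_dotProduct]

end Spectral

section IPG

variable {n d : ℕ} {A : Matrix (Fin n) (Fin d) ℝ} {B : Fin n → ℝ} {S : Matrix (Fin d) (Fin d) ℝ}
  {α δ : ℝ} {K : ℕ → Matrix (Fin d) (Fin d) ℝ} {x g : ℕ → Fin d → ℝ}

lemma sub_inv_succ_eq_mul (hS : S * S⁻¹ = 1) (hK : ∀ t, K (t + 1) = K t - α • (S * K t - 1))
    (t : ℕ) : K (t + 1) - S⁻¹ = (1 - α • S) * (K t - S⁻¹) := by
  rw [hK t]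
  simp only [Matrix.sub_mul, Matrix.mul_sub, Matrix.one_mul, smul_mul_assoc, smul_sub, hS]
  abel

lemma frob_sub_inv_le_pow_mul (hS : S * S⁻¹ = 1) (hK : ∀ t, K (t + 1) = K t - α • (S * K t - 1))
    {ρ : ℝ} (hρ : 0 ≤ ρ) (hP : ∀ v, vecEnorm ((1 - α • S) *ᵥ v) ≤ ρ * vecEnorm v) (t : ℕ) :
    frob (K t - S⁻¹) ≤ ρ ^ t * frob (K 0 - S⁻¹) := by
  induction t with
  | zero => simp
  | succ t ih =>
    rw [sub_inv_succ_eq_mul hS hK, pow_succ', mul_assoc]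
    exact (frob_mul_le hρ hP _).trans (mul_le_mul_of_nonneg_left ih hρ)

lemma gradient_succ_eq (hg : ∀ t, g t = Aᵀ *ᵥ (A *ᵥ x t - B))
    (hx : ∀ t, x (t + 1) = x t - δ • K (t + 1) *ᵥ g t) (t : ℕ) :
    g (t + 1) = (1 - δ • (Aᵀ * A * S⁻¹)) *ᵥ g t - δ • ((Aᵀ * A * (K (t + 1) - S⁻¹)) *ᵥ g t) := by
  have hstep : g (t + 1) = g t - δ • (Aᵀ * A * K (t + 1)) *ᵥ g t := by
    rw [hg (t + 1), hx t, mulVec_sub A, sub_right_comm, mulVec_sub Aᵀ, ← hg t, mulVec_smul,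
      mulVec_smul, mulVec_mulVec, mulVec_mulVec]
  rw [hstep]
  simp only [sub_mulVec, smul_mulVec, Matrix.mul_sub, one_mulVec, smul_sub]
  abel

lemma vecEnorm_gradient_succ_le (hS : S * S⁻¹ = 1)
    (hK : ∀ t, K (t + 1) = K t - α • (S * K t - 1)) (hg : ∀ t, g t = Aᵀ *ᵥ (A *ᵥ x t - B))
    (hx : ∀ t, x (t + 1) = x t - δ • K (t + 1) *ᵥ g t) (hδ : 0 ≤ δ) {μ ρ L : ℝ} (hρ : 0 ≤ ρ)
    (hL : 0 ≤ L) (hP : ∀ v, vecEnorm ((1 - α • S) *ᵥ v) ≤ ρ * vecEnorm v)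
    (hM : ∀ t, vecEnorm ((1 - δ • (Aᵀ * A * S⁻¹)) *ᵥ g t) ≤ μ * vecEnorm (g t))
    (hH : ∀ v, vecEnorm ((Aᵀ * A) *ᵥ v) ≤ L * vecEnorm v) (t : ℕ) :
    vecEnorm (g (t + 1)) ≤ (μ + δ * L * frob (K 0 - S⁻¹) * ρ ^ (t + 1)) * vecEnorm (g t) := by
  have hE : vecEnorm ((Aᵀ * A * (K (t + 1) - S⁻¹)) *ᵥ g t)
      ≤ L * (ρ ^ (t + 1) * frob (K 0 - S⁻¹) * vecEnorm (g t)) := by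
    rw [← mulVec_mulVec]
    refine (hH _).trans (mul_le_mul_of_nonneg_left ?_ hL)
    exact (vecEnorm_mulVec_le_frob _ _).trans
      (mul_le_mul_of_nonneg_right (frob_sub_inv_le_pow_mul hS hK hρ hP _) (vecEnorm_nonneg _))
  calc vecEnorm (g (t + 1))
      ≤ μ * vecEnorm (g t) + δ * vecEnorm ((Aᵀ * A * (K (t + 1) - S⁻¹)) *ᵥ g t) := by
        rw [gradient_succ_eq (S := S) hg hx]
        refine (vecEnorm_sub_le _ _).trans ?_
        rw [vecEnorm_smul, abs_of_nonneg hδ]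
        linarith [hM t]
    _ ≤ μ * vecEnorm (g t) + δ * (L * (ρ ^ (t + 1) * frob (K 0 - S⁻¹) * vecEnorm (g t))) := by
        gcongr
    _ = (μ + δ * L * frob (K 0 - S⁻¹) * ρ ^ (t + 1)) * vecEnorm (g t) := by ring

end IPG

section Regularized

variable {n d : ℕ} (U : orthogonalGroup (Fin d) ℝ) {A : Matrix (Fin n) (Fin d) ℝ}
  {lam : Fin d → ℝ} {β : ℝ}

lemma gram_add_smul_one_eq_spectralAlgHom (hA : Aᵀ * A = spectralAlgHom U lam) :
    Aᵀ * A + β • 1 = spectralAlgHom U (lam + β • 1) := by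
  rw [hA, map_add, map_smul, map_one]

lemma add_smul_one_apply_ne_zero (hβ : 0 < β) (hlam : ∀ i, 0 ≤ lam i) (i : Fin d) :
    (lam + β • 1) i ≠ 0 := by
  simp only [Pi.add_apply, Pi.smul_apply, Pi.one_apply, smul_eq_mul, mul_one]
  linarith [hlam i]

lemma inv_gram_add_smul_one_eq_spectralAlgHom (hA : Aᵀ * A = spectralAlgHom U lam) (hβ : 0 < β)
    (hlam : ∀ i, 0 ≤ lam i) : (Aᵀ * A + β • 1)⁻¹ = spectralAlgHom U (lam + β • 1)⁻¹ := by
  rw [gram_add_smul_one_eq_spectralAlgHom U hA,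
    spectralAlgHom_inv U (add_smul_one_apply_ne_zero hβ hlam)]

lemma gram_add_smul_one_mul_inv (hA : Aᵀ * A = spectralAlgHom U lam) (hβ : 0 < β)
    (hlam : ∀ i, 0 ≤ lam i) : (Aᵀ * A + β • 1) * (Aᵀ * A + β • 1)⁻¹ = 1 := by
  rw [inv_gram_add_smul_one_eq_spectralAlgHom U hA hβ hlam,
    gram_add_smul_one_eq_spectralAlgHom U hA]
  exact spectralAlgHom_mul_inv U (add_smul_one_apply_ne_zero hβ hlam)

lemma vecEnorm_gram_mulVec_le (hA : Aᵀ * A = spectralAlgHom U lam) (hlam : ∀ i, 0 ≤ lam i)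
    {b : ℝ} (hb0 : 0 ≤ b) (hb : ∀ i, lam i ≤ b) (v : Fin d → ℝ) :
    vecEnorm ((Aᵀ * A) *ᵥ v) ≤ b * vecEnorm v := by
  rw [hA]
  refine vecEnorm_spectralAlgHom_mulVec_le U _ _ hb0 fun i _ => ?_
  rw [abs_of_nonneg (hlam i)]
  exact hb i

lemma vecEnorm_one_sub_smul_gram_add_smul_one_mulVec_le (hA : Aᵀ * A = spectralAlgHom U lam)
    {α a b : ℝ} (hα : 0 ≤ α) (ha : ∀ i, a ≤ lam i) (hb : ∀ i, lam i ≤ b) (v : Fin d → ℝ) :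
    vecEnorm ((1 - α • (Aᵀ * A + β • 1)) *ᵥ v)
      ≤ richardsonRate α (a + β) (b + β) * vecEnorm v := by
  rw [gram_add_smul_one_eq_spectralAlgHom U hA, ← map_smul, ← map_one (spectralAlgHom U), ← map_sub]
  refine vecEnorm_spectralAlgHom_mulVec_le U _ _ (richardsonRate_nonneg _ _ _) fun i _ => ?_
  simp only [Pi.sub_apply, Pi.add_apply, Pi.smul_apply, Pi.one_apply, smul_eq_mul, mul_one]
  exact abs_one_sub_mul_le_richardsonRate hα (by linarith [ha i]) (by linarith [hb i])

lemma vecEnorm_one_sub_smul_gram_mul_inv_mulVec_transpose_mulVec_le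
    (hA : Aᵀ * A = spectralAlgHom U lam) (hβ : 0 < β) (hlam : ∀ i, 0 ≤ lam i) {δ a b : ℝ}
    (hδ : 0 ≤ δ) (ha0 : 0 ≤ a) (ha : ∀ i, lam i ≠ 0 → a ≤ lam i) (hb : ∀ i, lam i ≤ b)
    (w : Fin n → ℝ) :
    vecEnorm ((1 - δ • (Aᵀ * A * (Aᵀ * A + β • 1)⁻¹)) *ᵥ (Aᵀ *ᵥ w))
      ≤ richardsonRate δ (a / (a + β)) (b / (b + β)) * vecEnorm (Aᵀ *ᵥ w) := by
  rw [inv_gram_add_smul_one_eq_spectralAlgHom U hA hβ hlam, hA, ← map_mul, ← map_smul,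
    ← map_one (spectralAlgHom U), ← map_sub]
  refine vecEnorm_spectralAlgHom_mulVec_le U _ _ (richardsonRate_nonneg _ _ _) fun i hi => ?_
  have hi' : lam i ≠ 0 := fun h => hi (transpose_mulVec_transpose_mulVec_apply_eq_zero U hA h _)
  simp only [Pi.sub_apply, ← div_eq_mul_inv, Pi.div_apply, Pi.add_apply, Pi.smul_apply,
    Pi.one_apply, smul_eq_mul, mul_one]
  exact abs_one_sub_mul_le_richardsonRate hδ (div_add_le_div_add hβ ha0 (ha i hi'))
    (div_add_le_div_add hβ (hlam i) (hb i))

end Regularized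

/-- Theorem 1(i) of the paper: the gradients of the IPG method satisfy
`‖g(t+1)‖ ≤ (μ + δ λ₁ ‖K(0) − K_β‖_F ρ^{t+1}) ‖g(t)‖` with `μ* ≤ μ < 1` and `ϱ ≤ ρ < 1`. -/
theorem ipg_gradient_contraction
    (n d : ℕ) (hd : 0 < d)
    (A : Matrix (Fin n) (Fin d) ℝ) (B : Fin n → ℝ)
    (lam : Fin d → ℝ) (V : Matrix (Fin d) (Fin d) ℝ)
    (hV : Vᵀ * V = 1)
    (hdiag : Aᵀ * A = V * Matrix.diagonal lam * Vᵀ)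
    (hanti : Antitone lam)
    (r : ℕ) (hr1 : 1 ≤ r) (hrd : r ≤ d)
    (hlamr : 0 < lam ⟨r - 1, by omega⟩)
    (hzero : ∀ j : Fin d, r ≤ (j : ℕ) → lam j = 0)
    (α β δ : ℝ) (hβ : 0 < β)
    (hα0 : 0 < α) (hα : α < 2 / (lam ⟨0, hd⟩ + β))
    (hδ0 : 0 < δ) (hδ : δ < 2 * ((lam ⟨0, hd⟩ + β) / lam ⟨0, hd⟩))
    (K : ℕ → Matrix (Fin d) (Fin d) ℝ)
    (hK : ∀ t, K (t + 1) = K t - α • ((Aᵀ * A + β • 1) * K t - 1))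
    (x : ℕ → Fin d → ℝ) (g : ℕ → Fin d → ℝ)
    (hg : ∀ t, g t = Aᵀ.mulVec (A.mulVec (x t) - B))
    (hx : ∀ t, x (t + 1) = x t - δ • (K (t + 1)).mulVec (g t)) :
    ∃ μ ρ : ℝ,
      (lam ⟨0, hd⟩ - lam ⟨r - 1, by omega⟩) /
          (lam ⟨0, hd⟩ + lam ⟨r - 1, by omega⟩ +
            2 * (lam ⟨0, hd⟩ * lam ⟨r - 1, by omega⟩ / β)) ≤ μ ∧
      μ < 1 ∧
      (lam ⟨0, hd⟩ - lam ⟨d - 1, by omega⟩) /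
          (lam ⟨0, hd⟩ + lam ⟨d - 1, by omega⟩ + 2 * β) ≤ ρ ∧
      ρ < 1 ∧
      ∀ t : ℕ,
        vecEnorm (g (t + 1)) ≤
          (μ + δ * lam ⟨0, hd⟩ * frob (K 0 - (Aᵀ * A + β • 1)⁻¹) * ρ ^ (t + 1)) *
            vecEnorm (g t) := by
  obtain ⟨U, rfl⟩ : ∃ U : orthogonalGroup (Fin d) ℝ, (U : Matrix (Fin d) (Fin d) ℝ) = V :=
    ⟨⟨V, (mem_orthogonalGroup_iff' _ _).2 hV⟩, rfl⟩
  rw [← spectralAlgHom_apply] at hdiag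
  set l₁ := lam ⟨0, hd⟩
  set lr := lam ⟨r - 1, by omega⟩
  set ld := lam ⟨d - 1, by omega⟩
  have hle₁ : ∀ i, lam i ≤ l₁ := fun i => hanti (Nat.zero_le i.val)
  have hld : ∀ i, ld ≤ lam i := fun i => hanti (Nat.le_sub_one_of_lt i.2)
  have hlr : ∀ i, lam i ≠ 0 → lr ≤ lam i := fun i hi =>
    hanti (Nat.le_sub_one_of_lt (not_le.1 (mt (hzero i) hi)))
  have hnonneg : ∀ i, 0 ≤ lam i := fun i =>
    (eq_or_ne (lam i) 0).elim (fun h => h.ge) fun h => hlamr.le.trans (hlr i h)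
  have hl₁ : 0 < l₁ := hlamr.trans_le (hle₁ _)
  have hδl₁ : δ * (l₁ / (l₁ + β)) < 2 :=
    calc δ * (l₁ / (l₁ + β)) < 2 * ((l₁ + β) / l₁) * (l₁ / (l₁ + β)) := by gcongr
      _ = 2 := by field_simp
  refine ⟨_, _, sub_div_add_add_two_mul_div_le_richardsonRate δ hβ hlamr hl₁,
    richardsonRate_lt_one hδ0 (div_pos hlamr (by linarith))
      (div_add_le_div_add hβ hlamr.le (hle₁ _)) hδl₁,
    sub_div_add_add_two_mul_le_richardsonRate α hβ (hnonneg _) hl₁.le,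
    richardsonRate_lt_one hα0 (add_pos_of_nonneg_of_pos (hnonneg _) hβ)
      (by linarith [hld ⟨0, hd⟩]) ((lt_div_iff₀ (by linarith)).1 hα),
    vecEnorm_gradient_succ_le (gram_add_smul_one_mul_inv U hdiag hβ hnonneg) hK hg hx hδ0.le
      (richardsonRate_nonneg _ _ _) hl₁.le
      (vecEnorm_one_sub_smul_gram_add_smul_one_mulVec_le U hdiag hα0.le hld hle₁)
      (fun t => hg t ▸ vecEnorm_one_sub_smul_gram_mul_inv_mulVec_transpose_mulVec_le U hdiag hβ
        hnonneg hδ0.le hlamr.le hlr hle₁ _)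
      (vecEnorm_gram_mulVec_le U hdiag hnonneg hl₁.le hle₁)⟩
end

section
/- Under the noisy IPG model, suppose additionally that ρ < ρ_j for every j ∈ {1, …, d}. Then the sequence (R(t))_{t≥1} is strictly decreasing, lim_{t→∞} R(t) = λ₁·√d·w/(1−ρ) = w/w_bd, and if moreover w < w_bd then there exists a finite non-negative integer T′ such that R(t) < 1 for all t > T′. -/
open Matrix Finset Filter

/-- Euclidean norm of a vector in `ℝ^d`. -/
noncomputable def euclNorm {d : ℕ} (v : Fin d → ℝ) : ℝ :=
  Real.sqrt (∑ i, v i ^ 2)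

/-!
Each summand of `S(t)²` is the square of `ρᵗ a + (1 + ρ + ⋯ + ρᵗ) w` with `a = ‖k̃⁰_j(0)‖`.
One step changes this quantity by `ρᵗ (ρ (a + w) - a)`, which is negative exactly when
`ρ < a / (a + w) = ρ_j`; so every summand decreases strictly, and it tends to `w / (1 - ρ)`.
Hence `S(t) → √d · w / (1 - ρ)`, and `R(t) = λ₁ S(t)` eventually drops below `1` as soon as
this limit is below `1`, i.e. as soon as `w < w_bd`.
-/

theorem euclNorm_lt_euclNorm {d : ℕ} (hd : 0 < d) {u v : Fin d → ℝ}
    (hu : ∀ j, 0 ≤ u j) (huv : ∀ j, u j < v j) : euclNorm u < euclNorm v :=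
  Real.sqrt_lt_sqrt (sum_nonneg fun j _ => sq_nonneg (u j)) <|
    sum_lt_sum_of_nonempty (univ_nonempty_iff.2 ⟨⟨0, hd⟩⟩) fun j _ =>
      pow_lt_pow_left₀ (huv j) (hu j) two_ne_zero

theorem euclNorm_const {d : ℕ} (c : ℝ) : euclNorm (fun _ : Fin d => c) = Real.sqrt d * |c| := by
  rw [euclNorm, sum_const, card_univ, Fintype.card_fin, nsmul_eq_mul,
    Real.sqrt_mul (Nat.cast_nonneg d), Real.sqrt_sq_eq_abs]

theorem Filter.Tendsto.euclNorm {ι : Type*} {l : Filter ι} {d : ℕ} {f : ι → Fin d → ℝ}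
    {c : Fin d → ℝ} (hf : ∀ j, Tendsto (fun t => f t j) l (nhds (c j))) :
    Tendsto (fun t => euclNorm (f t)) l (nhds (euclNorm c)) :=
  (tendsto_finsetSum _ fun j _ => (hf j).pow 2).sqrt

noncomputable def noisyColumnBound (ρ w a : ℝ) (t : ℕ) : ℝ :=
  ρ ^ t * a + (∑ i ∈ range (t + 1), ρ ^ i) * w

namespace noisyColumnBound

variable {ρ w a : ℝ}

theorem nonneg (hρ : 0 ≤ ρ) (hw : 0 ≤ w) (ha : 0 ≤ a) (t : ℕ) :
    0 ≤ noisyColumnBound ρ w a t := by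
  have : 0 ≤ ∑ i ∈ range (t + 1), ρ ^ i := sum_nonneg fun i _ => pow_nonneg hρ i
  unfold noisyColumnBound
  positivity

theorem succ_sub (ρ w a : ℝ) (t : ℕ) :
    noisyColumnBound ρ w a (t + 1) - noisyColumnBound ρ w a t = ρ ^ t * (ρ * (a + w) - a) := by
  simp only [noisyColumnBound, sum_range_succ _ (t + 1)]
  ring

theorem succ_lt (hρ : 0 < ρ) (hstep : ρ * (a + w) < a) (t : ℕ) :
    noisyColumnBound ρ w a (t + 1) < noisyColumnBound ρ w a t := by
  have := succ_sub ρ w a t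
  have : ρ ^ t * (ρ * (a + w) - a) < 0 := mul_neg_of_pos_of_neg (pow_pos hρ t) (by linarith)
  linarith

theorem tendsto (hρ0 : 0 ≤ ρ) (hρ1 : ρ < 1) :
    Tendsto (noisyColumnBound ρ w a) atTop (nhds (w / (1 - ρ))) := by
  have hpow : Tendsto (fun t => ρ ^ t * a) atTop (nhds 0) := by
    simpa using (tendsto_pow_atTop_nhds_zero_of_lt_one hρ0 hρ1).mul_const a
  have hgeom : Tendsto (fun t => (∑ i ∈ range (t + 1), ρ ^ i) * w) atTop
      (nhds ((1 - ρ)⁻¹ * w)) :=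
    (((hasSum_geometric_of_lt_one hρ0 hρ1).tendsto_sum_nat).comp
      (tendsto_add_atTop_nat 1)).mul_const w
  rw [div_eq_inv_mul, ← zero_add ((1 - ρ)⁻¹ * w)]
  exact hpow.add hgeom

end noisyColumnBound

theorem noisy_ipg_R_decreasing_and_limit_general
    (n d : ℕ) (hd : 0 < d)
    (A : Matrix (Fin n) (Fin d) ℝ)
    (lam : Fin d → ℝ)
    (α w ρ : ℝ) (hα0 : 0 < α) (hα : α < 2 / lam ⟨0, hd⟩)
    (hw : 0 < w) (hρ0 : 0 < ρ) (hρ1 : ρ < 1)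
    (K0 : ℕ → Matrix (Fin d) (Fin d) ℝ)
    (S R : ℕ → ℝ)
    (hS : ∀ t, S t = Real.sqrt (∑ j : Fin d,
      (ρ ^ t * euclNorm (mcol (K0 0) j - mcol (Aᵀ * A)⁻¹ j) +
        (∑ i ∈ Finset.range (t + 1), ρ ^ i) * w) ^ 2))
    (hR : ∀ t, R t = lam ⟨0, hd⟩ * S t)
    (hρj : ∀ j : Fin d,
      ρ < euclNorm (mcol (K0 0) j - mcol (Aᵀ * A)⁻¹ j) /
            (euclNorm (mcol (K0 0) j - mcol (Aᵀ * A)⁻¹ j) + w)) :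
    (∀ t : ℕ, 1 ≤ t → R (t + 1) < R t) ∧
    Filter.Tendsto R Filter.atTop
      (nhds (lam ⟨0, hd⟩ * Real.sqrt d * w / (1 - ρ))) ∧
    lam ⟨0, hd⟩ * Real.sqrt d * w / (1 - ρ) =
      w / ((1 - ρ) / (lam ⟨0, hd⟩ * Real.sqrt d)) ∧
    (w < (1 - ρ) / (lam ⟨0, hd⟩ * Real.sqrt d) →
      ∃ T' : ℕ, ∀ t : ℕ, T' < t → R t < 1) := by
  set lam0 := lam ⟨0, hd⟩
  set a : Fin d → ℝ := fun j => euclNorm (mcol (K0 0) j - mcol (Aᵀ * A)⁻¹ j)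
  have hlam0 : 0 < lam0 := (div_pos_iff_of_pos_left two_pos).1 (hα0.trans hα)
  have h1ρ : 0 < 1 - ρ := sub_pos.2 hρ1
  have hc : 0 < lam0 * Real.sqrt d := mul_pos hlam0 (Real.sqrt_pos.2 (Nat.cast_pos.2 hd))
  have hSR : ∀ t, R t = lam0 * euclNorm (fun j => noisyColumnBound ρ w (a j) t) := fun t =>
    (hR t).trans (congrArg _ (hS t))
  have ha : ∀ j, 0 ≤ a j := fun j => Real.sqrt_nonneg _
  have hstep : ∀ j, ρ * (a j + w) < a j := fun j =>
    (lt_div_iff₀ (add_pos_of_nonneg_of_pos (ha j) hw)).1 (hρj j)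
  have hlim : Tendsto R atTop (nhds (lam0 * Real.sqrt d * w / (1 - ρ))) := by
    have := (Filter.Tendsto.euclNorm (c := fun _ => w / (1 - ρ)) fun j =>
      noisyColumnBound.tendsto (a := a j) hρ0.le hρ1).const_mul lam0
    rw [euclNorm_const, abs_of_pos (div_pos hw h1ρ), ← mul_assoc, ← mul_div_assoc] at this
    exact this.congr fun t => (hSR t).symm
  refine ⟨fun t _ => ?_, hlim, by rw [div_div_eq_mul_div, mul_comm w], fun hwbd => ?_⟩
  · rw [hSR, hSR]
    exact mul_lt_mul_of_pos_left (euclNorm_lt_euclNorm hd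
      (fun j => noisyColumnBound.nonneg hρ0.le hw.le (ha j) _)
      (fun j => noisyColumnBound.succ_lt hρ0 (hstep j) t)) hlam0
  · have hlim_lt : lam0 * Real.sqrt d * w / (1 - ρ) < 1 := by
      rw [div_lt_one h1ρ, mul_comm]
      exact (lt_div_iff₀ hc).1 hwbd
    obtain ⟨N, hN⟩ := eventually_atTop.1 (hlim.eventually_lt_const hlim_lt)
    exact ⟨N, fun t ht => hN t ht.le⟩

/-- under the noisy IPG model, if `ρ < ρ_j` for every `j`, then the
sequence `(R(t))_{t ≥ 1}` is strictly decreasing, `R(t) → λ₁ √d w/(1−ρ) = w/w_bd`, and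
if moreover `w < w_bd` then `R(t) < 1` for all sufficiently large `t`. -/
theorem noisy_ipg_R_decreasing_and_limit
    (n d : ℕ) (hd : 0 < d)
    (A : Matrix (Fin n) (Fin d) ℝ)
    (hPD : (Aᵀ * A).PosDef)
    (lam : Fin d → ℝ) (V : Matrix (Fin d) (Fin d) ℝ)
    (hV : Vᵀ * V = 1)
    (hdiag : Aᵀ * A = V * Matrix.diagonal lam * Vᵀ)
    (hanti : Antitone lam)
    (α w ρ : ℝ) (hα0 : 0 < α) (hα : α < 2 / lam ⟨0, hd⟩)
    (hw : 0 < w) (hρ0 : 0 < ρ) (hρ1 : ρ < 1)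
    (hcontract : ∀ v : Fin d → ℝ,
      euclNorm (((1 : Matrix (Fin d) (Fin d) ℝ) - α • (Aᵀ * A)).mulVec v) ≤ ρ * euclNorm v)
    (K0 : ℕ → Matrix (Fin d) (Fin d) ℝ)
    (S R : ℕ → ℝ)
    (hS : ∀ t, S t = Real.sqrt (∑ j : Fin d,
      (ρ ^ t * euclNorm (mcol (K0 0) j - mcol (Aᵀ * A)⁻¹ j) +
        (∑ i ∈ Finset.range (t + 1), ρ ^ i) * w) ^ 2))
    (hR : ∀ t, R t = lam ⟨0, hd⟩ * S t)
    (hρj : ∀ j : Fin d,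
      ρ < euclNorm (mcol (K0 0) j - mcol (Aᵀ * A)⁻¹ j) /
            (euclNorm (mcol (K0 0) j - mcol (Aᵀ * A)⁻¹ j) + w)) :
    (∀ t : ℕ, 1 ≤ t → R (t + 1) < R t) ∧
    Filter.Tendsto R Filter.atTop
      (nhds (lam ⟨0, hd⟩ * Real.sqrt d * w / (1 - ρ))) ∧
    lam ⟨0, hd⟩ * Real.sqrt d * w / (1 - ρ) =
      w / ((1 - ρ) / (lam ⟨0, hd⟩ * Real.sqrt d)) ∧
    (w < (1 - ρ) / (lam ⟨0, hd⟩ * Real.sqrt d) →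
      ∃ T' : ℕ, ∀ t : ℕ, T' < t → R t < 1) :=
  noisy_ipg_R_decreasing_and_limit_general n d hd A lam α w ρ hα0 hα hw hρ0 hρ1 K0 S R hS hR hρj
end
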